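/- Let (X, μ, T) be a dynamical system with X 0-dimensional. Given ε > 0 and an integer N > 0, there is a clopen subset A ⊂ X such that the subsets TⁱA, i = 0, …, N, are pairwise disjoint and μ(X ∖ ⨆_{i=0}^N TⁱA) < ε. -/

import Mathlib

/-!
Choose a non-empty clopen set `B` so small that the points visiting `B` within `N` steps have
measure `< ε/2`; this uses only that `μ` is non-atomic and `X` is zero-dimensional.
A non-singular ergodic homeomorphism of a non-atomic space is conservative (Hopf), so by
ergodicity almost every orbit visits `B` infinitely often in both directions. Hence almost every
point lies in a gap `[a, b]` between two consecutive visits, and after bounding `|a|, b ≤ M` the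
remaining points have measure `< ε/2`. Let `A` consist of the points whose last visit was a
multiple of `N + 1` steps ago and whose next visit is more than `N` steps ahead: it is clopen,
the time since the last visit separates `A, TA, …, TᴺA`, and a point of a gap missed by
their union visits `B` within `N` steps.
-/

open MeasureTheory Topology

/-- `X` is 0-dimensional: it has a countable base of clopen sets. -/
def ZeroDimensional (X : Type*) [TopologicalSpace X] : Prop :=
  ∃ b : Set (Set X), b.Countable ∧ (∀ s ∈ b, IsClopen s) ∧
    TopologicalSpace.IsTopologicalBasis b

/-- A dynamical system: a non-atomic Borel probability measure of full support on a
topological space together with an ergodic non-singular homeomorphism whose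
Radon–Nikodym derivative `d(μ∘T)/dμ` has the continuous version `ω`. -/
structure DynSys (X : Type*) [TopologicalSpace X] [MeasurableSpace X] where
  μ : Measure X
  T : X ≃ₜ X
  ω : X → ℝ
  prob : IsProbabilityMeasure μ
  noAtoms : NoAtoms μ
  fullSupport : ∀ U : Set X, IsOpen U → U.Nonempty → 0 < μ U
  ergodic : ∀ A : Set X, MeasurableSet A → (⇑T) ⁻¹' A = A → μ A = 0 ∨ μ A = 1
  ωCont : Continuous ω
  ωPos : ∀ x, 0 < ω x
  rnDeriv : Measure.map (⇑T.symm) μ = μ.withDensity (fun x => ENNReal.ofReal (ω x))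

namespace DynSys

variable {X Y : Type*} [TopologicalSpace X] [MeasurableSpace X]
  [TopologicalSpace Y] [MeasurableSpace Y]

/-- The iterate `Tⁿ` for `n : ℤ`. -/
noncomputable def iter (D : DynSys X) (n : ℤ) (x : X) : X :=
  (D.T.toEquiv ^ n) x

/-- The Radon–Nikodym cocycle `ρ_μ(x, Tⁿx)`. -/
noncomputable def rho (D : DynSys X) (x : X) (n : ℤ) : ℝ :=
  if 0 ≤ n then ∑ i ∈ Finset.range n.toNat, Real.log (D.ω (D.iter (i : ℤ) x))
  else - ∑ i ∈ Finset.range (-n).toNat, Real.log (D.ω (D.iter (i : ℤ) (D.iter n x)))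

/-- An inessential reduction: a `T`-invariant dense `G_δ` subset of full measure. -/
def InessRed (D : DynSys X) (X' : Set X) : Prop :=
  (⇑D.T) ⁻¹' X' = X' ∧ Dense X' ∧ IsGδ X' ∧ D.μ X' = 1

/-- A set is virtually clopen if its intersection with some inessential reduction `X'`
is relatively clopen in `X'`. -/
def VirtClopen (D : DynSys X) (A : Set X) : Prop :=
  ∃ X' : Set X, D.InessRed X' ∧ IsClopen (Subtype.val ⁻¹' A : Set X')

/-- The asymptotic range `r(ρ_μ)` of the Radon–Nikodym cocycle. -/
def asymRange (D : DynSys X) : Set ℝ :=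
  {t | ∀ ε : ℝ, 0 < ε → ∀ A : Set X, MeasurableSet A → 0 < D.μ A →
    ∃ k : ℤ, k ≠ 0 ∧ ∃ B : Set X, MeasurableSet B ∧ B ⊆ A ∧ 0 < D.μ B ∧
      ∀ x ∈ B, |D.rho x k - t| < ε}

/-- The topological asymptotic range `r_top(ρ_μ)` of the Radon–Nikodym cocycle. -/
def topAsymRange (D : DynSys X) : Set ℝ :=
  {t | ∀ ε : ℝ, 0 < ε → ∀ A : Set X, D.VirtClopen A → 0 < D.μ A →
    ∃ k : ℤ, k ≠ 0 ∧ ∃ B : Set X, B ⊆ A ∧ 0 < D.μ B ∧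
      ∀ x ∈ B, |D.rho x k - t| < ε}

/-- Type `III`: there is no equivalent σ-finite `T`-invariant measure. -/
def TypeIII (D : DynSys X) : Prop :=
  ¬ ∃ ν : Measure X, SigmaFinite ν ∧ ν ≪ D.μ ∧ D.μ ≪ ν ∧ Measure.map (⇑D.T) ν = ν

/-- Almost continuous orbit equivalence of two dynamical systems. -/
def ACOE (D : DynSys X) (E : DynSys Y) : Prop :=
  ∃ (X₀ : Set X) (Y₀ : Set Y) (φ : X → Y) (ψ : Y → X),
    D.InessRed X₀ ∧ E.InessRed Y₀ ∧
    Set.BijOn φ X₀ Y₀ ∧ ContinuousOn φ X₀ ∧ ContinuousOn ψ Y₀ ∧ Set.InvOn ψ φ X₀ Y₀ ∧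
    (∀ x ∈ X₀, φ '' {z | ∃ k : ℤ, z = D.iter k x} = {w | ∃ k : ℤ, w = E.iter k (φ x)}) ∧
    (∃ f : Y → ℝ, ContinuousOn f Y₀ ∧ (∀ y ∈ Y₀, 0 < f y) ∧
      ∀ A : Set Y, MeasurableSet A →
        D.μ (φ ⁻¹' A ∩ X₀) = ∫⁻ y in A, ENNReal.ofReal (f y) ∂E.μ) ∧
    (∃ n m : X → ℤ, ContinuousOn n X₀ ∧ ContinuousOn m X₀ ∧
      ∀ x ∈ X₀, φ (D.T x) = E.iter (n x) (φ x) ∧ E.T (φ x) = φ (D.iter (m x) x))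

end DynSys

/-- An `r`-uniform subrelation of `R_T` on the clopen set `C`, with fundamental
(clopen) subset `B` and splitting homeomorphism `(i, b) ↦ h i b : I_r × B → C`,
each `h i` being given on `B` by `h i b = T^(a i b) b` with `a i` continuous
(i.e. `h i` belongs to the topological full groupoid `[[T]]_top`);
`proj` and `idx` form the continuous inverse, `proj` being the associated projection. -/
structure UniformRel {X : Type*} [TopologicalSpace X] [MeasurableSpace X]
    (D : DynSys X) (r : ℕ) (C B : Set X) where
  rpos : 0 < r
  h : Fin r → X → X
  a : Fin r → X → ℤ
  clopenB : IsClopen B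
  subB : B ⊆ C
  h_zero : ∀ b ∈ B, h ⟨0, rpos⟩ b = b
  h_eq : ∀ (i : Fin r), ∀ b ∈ B, h i b = D.iter (a i b) b
  a_cont : ∀ i : Fin r, ContinuousOn (a i) B
  h_cont : ∀ i : Fin r, ContinuousOn (h i) B
  maps : ∀ i : Fin r, Set.MapsTo (h i) B C
  inj : ∀ (i j : Fin r), ∀ b ∈ B, ∀ b' ∈ B, h i b = h j b' → i = j ∧ b = b'
  proj : X → X
  idx : X → Fin r
  proj_cont : ContinuousOn proj C
  idx_cont : ContinuousOn idx C
  proj_mem : ∀ x ∈ C, proj x ∈ B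
  h_proj : ∀ x ∈ C, h (idx x) (proj x) = x

open Set Filter Function
open scoped ENNReal

theorem iInter_eq_singleton_of_hasAntitoneBasis_nhds {α : Type*} [TopologicalSpace α]
    [T1Space α] {x : α} {U : ℕ → Set α} (h : (𝓝 x).HasAntitoneBasis U) : ⋂ n, U n = {x} := by
  rw [← ker_nhds x, h.toHasBasis.ker]
  simp

theorem exists_measure_compl_lt_of_ae_exists_mem {α : Type*} [MeasurableSpace α] {μ : Measure α}
    [IsFiniteMeasure μ] {s : ℕ → Set α} (hs : ∀ n, MeasurableSet (s n)) (hmono : Monotone s)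
    (hae : ∀ᵐ x ∂μ, ∃ n, x ∈ s n) {δ : ℝ≥0∞} (hδ : 0 < δ) : ∃ n, μ (s n)ᶜ < δ := by
  have hnull : μ (⋂ n, (s n)ᶜ) = 0 := by
    rw [ae_iff] at hae
    convert hae using 2
    ext
    simp
  have := tendsto_measure_iInter_atTop (fun n => (hs n).compl.nullMeasurableSet)
    (fun m n hmn => compl_subset_compl.2 (hmono hmn)) ⟨0, measure_ne_top μ _⟩
  rw [hnull] at this
  exact (this.eventually_lt_const hδ).exists

section NonAtomic

variable {α : Type*} [MeasurableSpace α] {μ : Measure α} [IsFiniteMeasure μ] [NullSingletonClass μ]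

theorem tendsto_measure_zero_of_antitone_of_subsingleton {s : ℕ → Set α}
    (hs : ∀ n, MeasurableSet (s n)) (hanti : Antitone s) (hsub : (⋂ n, s n).Subsingleton) :
    Tendsto (fun n => μ (s n)) atTop (𝓝 0) :=
  hsub.measure_zero μ ▸ tendsto_measure_iInter_atTop (fun n => (hs n).nullMeasurableSet) hanti
    ⟨0, measure_ne_top μ _⟩

theorem ZeroDimensional.exists_isClopen_measure_biUnion_preimage_lt {ι : Type*}
    [TopologicalSpace α] [T1Space α] [OpensMeasurableSpace α] (hX : ZeroDimensional α)
    (s : Finset ι) {f : ι → α → α} (hf : ∀ i, Measurable (f i)) (hinj : ∀ i, Injective (f i))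
    (x : α) {δ : ℝ≥0∞} (hδ : 0 < δ) : ∃ U, IsClopen U ∧ x ∈ U ∧ μ (⋃ i ∈ s, f i ⁻¹' U) < δ := by
  obtain ⟨b, hbc, hbcl, hb⟩ := hX
  have := hb.secondCountableTopology hbc
  obtain ⟨V, hV, hbasis⟩ := (hb.nhds_hasBasis (a := x)).exists_antitone_subbasis
  have hsmall : ∀ i, Tendsto (fun n => μ (f i ⁻¹' V n)) atTop (𝓝 0) := fun i =>
    tendsto_measure_zero_of_antitone_of_subsingleton
      (fun n => (hbcl _ (hV n).1).isOpen.measurableSet.preimage (hf i))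
      (fun m n hmn => preimage_mono (hbasis.antitone hmn)) <| by
        rw [← preimage_iInter, iInter_eq_singleton_of_hasAntitoneBasis_nhds hbasis]
        exact subsingleton_singleton.preimage (hinj i)
  have hsum := tendsto_finsetSum s fun i _ => hsmall i
  rw [Finset.sum_const_zero] at hsum
  obtain ⟨n, hn⟩ := (hsum.eventually_lt_const hδ).exists
  exact ⟨V n, hbcl _ (hV n).1, (hV n).2, (measure_biUnion_finset_le s _).trans_lt hn⟩

variable [TopologicalSpace α] [SecondCountableTopology α] [T1Space α] [OpensMeasurableSpace α]

theorem exists_subset_measure_pos_lt {W : Set α} (hW : MeasurableSet W) (h0 : μ W ≠ 0) :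
    ∃ S ⊆ W, MeasurableSet S ∧ 0 < μ S ∧ μ S < μ W := by
  obtain ⟨x, -, hx⟩ := exists_mem_forall_mem_nhdsWithin_pos_measure h0
  obtain ⟨U, hU, hbasis⟩ := (nhds_basis_opens x).exists_antitone_subbasis
  have hsmall : Tendsto (fun n => μ (W ∩ U n)) atTop (𝓝 0) := by
    refine tendsto_measure_zero_of_antitone_of_subsingleton
      (fun n => hW.inter (hU n).2.measurableSet)
      (fun m n hmn => inter_subset_inter_right W (hbasis.antitone hmn)) ?_
    refine (subsingleton_singleton (a := x)).anti ?_
    rw [← iInter_eq_singleton_of_hasAntitoneBasis_nhds hbasis]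
    exact iInter_mono fun n => inter_subset_right
  obtain ⟨n, hn⟩ := (hsmall.eventually_lt_const (pos_iff_ne_zero.2 h0)).exists
  exact ⟨W ∩ U n, inter_subset_left, hW.inter (hU n).2.measurableSet,
    hx _ (inter_mem_nhdsWithin W ((hU n).2.mem_nhds (hU n).1)), hn⟩

end NonAtomic

namespace Homeomorph

variable {X : Type*} [TopologicalSpace X]

theorem toEquiv_zpow (T : X ≃ₜ X) (k : ℤ) : (T ^ k).toEquiv = T.toEquiv ^ k :=
  map_zpow (⟨⟨toEquiv, rfl⟩, fun _ _ => rfl⟩ : (X ≃ₜ X) →* Equiv.Perm X) T k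

theorem pow_apply_eq_iterate (T : X ≃ₜ X) (n : ℕ) (x : X) : (T ^ n) x = T^[n] x := by
  induction n generalizing x with
  | zero => rfl
  | succ n ih => rw [pow_succ, mul_apply, ih, iterate_succ_apply]

theorem zpow_natCast_apply (T : X ≃ₜ X) (n : ℕ) (x : X) : (T ^ (n : ℤ)) x = T^[n] x := by
  rw [zpow_natCast, pow_apply_eq_iterate]

theorem zpow_neg_natCast_apply (T : X ≃ₜ X) (n : ℕ) (x : X) :
    (T ^ (-(n : ℤ))) x = T.symm^[n] x := by
  rw [zpow_neg, zpow_natCast, ← inv_pow, pow_apply_eq_iterate]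
  rfl

theorem zpow_add_apply (T : X ≃ₜ X) (a b : ℤ) (x : X) : (T ^ (a + b)) x = (T ^ a) ((T ^ b) x) := by
  rw [zpow_add, mul_apply]

theorem image_zpow (T : X ≃ₜ X) (k : ℤ) (s : Set X) : ⇑(T ^ k) '' s = ⇑(T ^ (-k)) ⁻¹' s := by
  rw [image_eq_preimage_symm, zpow_neg]
  rfl

theorem preimage_iUnion_preimage_zpow (T : X ≃ₜ X) (s : Set X) :
    ⇑T ⁻¹' ⋃ k : ℤ, ⇑(T ^ k) ⁻¹' s = ⋃ k : ℤ, ⇑(T ^ k) ⁻¹' s := by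
  ext x
  simp only [mem_preimage, mem_iUnion]
  refine (Equiv.addRight (1 : ℤ)).exists_congr fun k => ?_
  simp [zpow_add_apply]

end Homeomorph

section Recurrence

variable {α : Type*} [MeasurableSpace α] {μ : Measure α}

theorem MeasureTheory.PreErgodic.measure_compl_iUnion_preimage_zpow_eq_zero [TopologicalSpace α]
    [BorelSpace α] {T : α ≃ₜ α} (herg : PreErgodic T μ) {s : Set α}
    (hs : MeasurableSet s) (h0 : μ s ≠ 0) : μ (⋃ k : ℤ, ⇑(T ^ k) ⁻¹' s)ᶜ = 0 := by
  have hsub : s ⊆ ⋃ k : ℤ, ⇑(T ^ k) ⁻¹' s := fun x hx => mem_iUnion.2 ⟨0, hx⟩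
  refine (herg.measure_self_or_compl_eq_zero
    (.iUnion fun k => (T ^ k).measurable hs) (T.preimage_iUnion_preimage_zpow s)).resolve_left ?_
  exact fun h => h0 (measure_mono_null hsub h)

/-- Hopf: split a wandering set `W` into two parts of positive measure; by ergodicity both of
their orbits are conull, yet they are disjoint since `W` meets each orbit at most once. -/
theorem Homeomorph.conservative_of_preErgodic [TopologicalSpace α] [SecondCountableTopology α]
    [T1Space α] [BorelSpace α] [IsFiniteMeasure μ] [NullSingletonClass μ] (T : α ≃ₜ α)
    (hT : Measure.QuasiMeasurePreserving T μ μ) (herg : PreErgodic T μ) : Conservative T μ := by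
  refine ⟨hT, fun W hW h0 => ?_⟩
  by_contra! hwander
  have hwander' : ∀ x ∈ W, ∀ k : ℤ, 0 < k → (T ^ k) x ∉ W := fun x hx k hk => by
    lift k to ℕ using hk.le
    rw [T.zpow_natCast_apply]
    exact hwander x hx k (by omega)
  obtain ⟨S, hSW, hS, hS0, hSlt⟩ := exists_subset_measure_pos_lt hW h0
  have hdiff : μ (W \ S) ≠ 0 := fun h => by
    have := tsub_le_iff_right.1 ((le_measure_sdiff (μ := μ) (s₁ := W) (s₂ := S)).trans_eq h)
    exact hSlt.not_ge (by simpa using this)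
  have hdisj : Disjoint (⋃ k : ℤ, ⇑(T ^ k) ⁻¹' S) (⋃ k : ℤ, ⇑(T ^ k) ⁻¹' (W \ S)) := by
    simp only [disjoint_iUnion_left, disjoint_iUnion_right]
    intro j k
    refine disjoint_left.2 fun x hxk hxj => ?_
    have hreturn : ∀ a b : ℤ, (T ^ (a - b)) ((T ^ b) x) = (T ^ a) x := fun a b => by
      rw [← T.zpow_add_apply, sub_add_cancel]
    rcases lt_trichotomy j k with hjk | rfl | hkj
    · exact hwander' _ hxj.1 (k - j) (by omega) (by rw [hreturn]; exact hSW hxk)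
    · exact hxj.2 hxk
    · exact hwander' _ (hSW hxk) (j - k) (by omega) (by rw [hreturn]; exact hxj.1)
  have huniv : μ univ = 0 := by
    rw [← compl_empty, ← hdisj.inter_eq, compl_inter]
    exact measure_union_null
      (herg.measure_compl_iUnion_preimage_zpow_eq_zero hS hS0.ne')
      (herg.measure_compl_iUnion_preimage_zpow_eq_zero (hW.diff hS) hdiff)
  exact h0 (measure_mono_null (subset_univ W) huniv)

theorem MeasureTheory.Conservative.ae_frequently_mem_of_preErgodic {f : α → α}
    (hf : Conservative f μ) (herg : PreErgodic f μ) {s : Set α} (hs : MeasurableSet s)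
    (h0 : μ s ≠ 0) :
    ∀ᵐ x ∂μ, ∃ᶠ n in atTop, f^[n] x ∈ s := by
  set E := limsup (fun n => (preimage f)^[n] s) atTop
  have hE : E = {x | ∃ᶠ n in atTop, f^[n] x ∈ s} := by
    ext x
    simp only [E, ← preimage_iterate_eq]
    exact mem_limsup_iff_frequently_mem
  have hinv : f ⁻¹' E = E :=
    CompleteLatticeHom.apply_limsup_iterate (CompleteLatticeHom.setPreimage f) s
  have hEm : MeasurableSet E := .measurableSet_limsup fun n => by
    rw [← preimage_iterate_eq]
    exact hf.toQuasiMeasurePreserving.measurable.iterate n hs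
  have hE0 : μ E ≠ 0 := fun h => h0 <| by
    rw [← hf.measure_inter_frequently_image_mem_eq hs.nullMeasurableSet, ← hE]
    exact measure_mono_null inter_subset_right h
  have hEc := (herg.measure_self_or_compl_eq_zero hEm hinv).resolve_left hE0
  filter_upwards [measure_eq_zero_iff_ae_notMem.1 hEc] with x hx
  simpa only [hE, mem_compl_iff, mem_ofPred_eq, not_not] using hx

end Recurrence

namespace Homeomorph

variable {X : Type*} [TopologicalSpace X] (T : X ≃ₜ X) (B : Set X)

def visitGap (a b : ℤ) : Set X :=
  ⇑(T ^ a) ⁻¹' B ∩ ⇑(T ^ b) ⁻¹' B ∩ ⋂ k ∈ Finset.Ioo a b, (⇑(T ^ k) ⁻¹' B)ᶜ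

def visitTower (M : ℕ) : Set X :=
  ⋃ a ∈ Finset.Icc (-(M : ℤ)) 0, ⋃ b ∈ Finset.Ioc 0 (M : ℤ), T.visitGap B a b

def rokhlinBase (N M : ℕ) : Set X :=
  ⋃ a ∈ (Finset.Icc (-(M : ℤ)) 0).filter ((N + 1 : ℤ) ∣ ·),
    ⋃ b ∈ Finset.Ioc (N : ℤ) (M + N), T.visitGap B a b

variable {T B}

theorem mem_visitGap {a b : ℤ} {x : X} :
    x ∈ T.visitGap B a b ↔
      (T ^ a) x ∈ B ∧ (T ^ b) x ∈ B ∧ ∀ k, a < k → k < b → (T ^ k) x ∉ B := by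
  simp [visitGap, and_assoc]

theorem preimage_zpow_visitGap (a b c : ℤ) :
    ⇑(T ^ c) ⁻¹' T.visitGap B a b = T.visitGap B (a + c) (b + c) := by
  ext x
  simp only [mem_preimage, mem_visitGap, ← zpow_add_apply]
  refine and_congr_right' (and_congr_right' ⟨fun h k hak hkb => ?_, fun h k hak hkb => ?_⟩)
  · simpa using h (k - c) (by omega) (by omega)
  · exact h (k + c) (by omega) (by omega)

theorem le_of_mem_visitGap {a b c : ℤ} {x : X} (hx : x ∈ T.visitGap B a b)
    (hc : (T ^ c) x ∈ B) (hcb : c < b) : c ≤ a := by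
  by_contra! hac
  exact (mem_visitGap.1 hx).2.2 c hac hcb hc

theorem isClopen_visitGap (hB : IsClopen B) (a b : ℤ) : IsClopen (T.visitGap B a b) :=
  ((hB.preimage (T ^ a).continuous).inter (hB.preimage (T ^ b).continuous)).inter
    (isClopen_biInter_finset fun k _ => (hB.preimage (T ^ k).continuous).compl)

theorem isClopen_visitTower (hB : IsClopen B) (M : ℕ) : IsClopen (T.visitTower B M) :=
  isClopen_biUnion_finset fun _ _ => isClopen_biUnion_finset fun _ _ => isClopen_visitGap hB _ _

theorem isClopen_rokhlinBase (hB : IsClopen B) (N M : ℕ) : IsClopen (T.rokhlinBase B N M) :=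
  isClopen_biUnion_finset fun _ _ => isClopen_biUnion_finset fun _ _ => isClopen_visitGap hB _ _

theorem monotone_visitTower : Monotone (T.visitTower B) := by
  intro M M' h x
  simp only [visitTower, mem_iUnion, Finset.mem_Icc, Finset.mem_Ioc, exists_prop]
  rintro ⟨a, ha, b, hb, hx⟩
  exact ⟨a, by omega, b, by omega, hx⟩

theorem exists_mem_visitTower {x : X} (hpast : ∃ n : ℕ, (T ^ (-(n : ℤ))) x ∈ B)
    (hfuture : ∃ n : ℕ, 0 < n ∧ (T ^ (n : ℤ)) x ∈ B) : ∃ M, x ∈ T.visitTower B M := by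
  classical
  set m := Nat.find hpast
  set n := Nat.find hfuture
  have hm : (T ^ (-(m : ℤ))) x ∈ B := Nat.find_spec hpast
  obtain ⟨hn0, hn⟩ : 0 < n ∧ (T ^ (n : ℤ)) x ∈ B := Nat.find_spec hfuture
  refine ⟨max m n, mem_iUnion₂.2 ⟨-m, by simp, mem_iUnion₂.2 ⟨n, by simp; omega, ?_⟩⟩⟩
  refine mem_visitGap.2 ⟨hm, hn, fun k hmk hkn hk => ?_⟩
  rcases le_or_gt k 0 with hk0 | hk0
  · lift -k to ℕ using (by omega) with j hj
    exact Nat.find_min hpast (m := j) (by omega) (by rwa [hj, neg_neg])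
  · lift k to ℕ using hk0.le
    exact Nat.find_min hfuture (m := k) (by omega) ⟨by omega, hk⟩

theorem disjoint_image_rokhlinBase {N M i j : ℕ} (hi : i ≤ N) (hj : j ≤ N) (hij : i ≠ j) :
    Disjoint (⇑(T ^ (i : ℤ)) '' T.rokhlinBase B N M) (⇑(T ^ (j : ℤ)) '' T.rokhlinBase B N M) := by
  rw [image_zpow, image_zpow, disjoint_left]
  intro x hxi hxj
  simp only [rokhlinBase, preimage_iUnion, mem_iUnion, Finset.mem_filter, Finset.mem_Icc,
    Finset.mem_Ioc, exists_prop, preimage_zpow_visitGap] at hxi hxj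
  obtain ⟨a, ⟨ha, hNa⟩, b, hb, hx⟩ := hxi
  obtain ⟨a', ⟨ha', hNa'⟩, b', hb', hx'⟩ := hxj
  have h1 := le_of_mem_visitGap hx (mem_visitGap.1 hx').1 (by omega)
  have h2 := le_of_mem_visitGap hx' (mem_visitGap.1 hx).1 (by omega)
  have hdvd : (N + 1 : ℤ) ∣ (i : ℤ) - j := by
    rw [show (i : ℤ) - j = a - a' by omega]
    exact dvd_sub hNa hNa'
  have := Int.eq_zero_of_abs_lt_dvd hdvd (by rw [abs_lt]; omega)
  omega

theorem visitTower_subset (N M : ℕ) :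
    T.visitTower B M ⊆ (⋃ i ∈ Finset.range (N + 1), ⇑(T ^ (i : ℤ)) '' T.rokhlinBase B N M) ∪
      ⋃ k ∈ Finset.Icc 1 N, ⇑(T ^ (k : ℤ)) ⁻¹' B := by
  intro x hx
  simp only [visitTower, mem_iUnion, Finset.mem_Icc, Finset.mem_Ioc, exists_prop] at hx
  obtain ⟨a, ha, b, hb, hx⟩ := hx
  rcases le_or_gt b N with hbN | hbN
  · lift b to ℕ using hb.1.le
    exact .inr <| mem_iUnion₂.2 ⟨b, Finset.mem_Icc.2 ⟨by omega, by omega⟩, (mem_visitGap.1 hx).2.1⟩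
  -- go back `i = (-a) mod (N + 1)` steps, so that the last visit is a multiple of `N + 1` steps ago
  obtain ⟨i, hi⟩ : ∃ i : ℕ, (i : ℤ) = (-a) % (N + 1) :=
    ⟨_, Int.toNat_of_nonneg (Int.emod_nonneg _ (by omega))⟩
  have hiN : (i : ℤ) < N + 1 := hi ▸ Int.emod_lt_of_pos _ (by omega)
  have hdiv := Int.emod_add_mul_ediv (-a) (N + 1)
  have hq : 0 ≤ (-a) / (N + 1) := Int.ediv_nonneg (by omega) (by omega)
  refine .inl <| mem_iUnion₂.2 ⟨i, Finset.mem_range.2 (by omega), ?_⟩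
  rw [image_zpow]
  simp only [rokhlinBase, preimage_iUnion, mem_iUnion, Finset.mem_filter, Finset.mem_Icc,
    Finset.mem_Ioc, exists_prop, preimage_zpow_visitGap]
  refine ⟨a + i, ⟨⟨by omega, by nlinarith⟩, ⟨-((-a) / (N + 1)), by linarith⟩⟩, b + i,
    ⟨by omega, by omega⟩, by simpa using hx⟩

end Homeomorph

namespace DynSys

attribute [instance] DynSys.prob

variable {X : Type*} [TopologicalSpace X] [MeasurableSpace X] (D : DynSys X)

instance : NullSingletonClass D.μ := D.noAtoms

theorem iter_apply (k : ℤ) (x : X) : D.iter k x = (D.T ^ k) x := by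
  rw [iter, ← Homeomorph.toEquiv_zpow]
  rfl

theorem preErgodic : PreErgodic D.T D.μ :=
  ⟨fun s hs hinv => eventuallyConst_set'.2 <| (D.ergodic s hs hinv).imp ae_eq_empty.2
    fun h => ae_eq_univ.2 ((prob_compl_eq_zero_iff hs).2 h)⟩

theorem preErgodic_symm : PreErgodic D.T.symm D.μ :=
  ⟨fun s hs hinv => D.preErgodic.aeconst_set hs <| by
    nth_rewrite 1 [← hinv]
    ext
    simp⟩

variable [BorelSpace X]

theorem quasiMeasurePreserving_symm : Measure.QuasiMeasurePreserving D.T.symm D.μ D.μ :=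
  ⟨D.T.symm.measurable, D.rnDeriv ▸ withDensity_absolutelyContinuous _ _⟩

theorem quasiMeasurePreserving : Measure.QuasiMeasurePreserving D.T D.μ D.μ := by
  refine ⟨D.T.measurable, ?_⟩
  have hac : D.μ ≪ D.μ.map D.T.symm := D.rnDeriv ▸ withDensity_absolutelyContinuous'
    (ENNReal.measurable_ofReal.comp D.ωCont.measurable).aemeasurable
    (.of_forall fun x => by simpa using D.ωPos x)
  simpa [Measure.map_map D.T.measurable D.T.symm.measurable] using hac.map D.T.measurable

variable [SecondCountableTopology X] [T1Space X]

theorem ae_visits_past_and_future {B : Set X} (hB : MeasurableSet B) (h0 : D.μ B ≠ 0) :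
    ∀ᵐ x ∂D.μ, (∃ n : ℕ, (D.T ^ (-(n : ℤ))) x ∈ B) ∧ ∃ n : ℕ, 0 < n ∧ (D.T ^ (n : ℤ)) x ∈ B := by
  have hpast := (D.T.symm.conservative_of_preErgodic D.quasiMeasurePreserving_symm
    D.preErgodic_symm).ae_frequently_mem_of_preErgodic D.preErgodic_symm hB h0
  have hfuture := (D.T.conservative_of_preErgodic D.quasiMeasurePreserving
    D.preErgodic).ae_frequently_mem_of_preErgodic D.preErgodic hB h0
  filter_upwards [hpast, hfuture] with x hxp hxf
  obtain ⟨m, -, hm⟩ := frequently_atTop.1 hxp 0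
  obtain ⟨n, hn, hn'⟩ := frequently_atTop.1 hxf 1
  exact ⟨⟨m, by rwa [Homeomorph.zpow_neg_natCast_apply]⟩,
    ⟨n, hn, by rwa [Homeomorph.zpow_natCast_apply]⟩⟩

theorem ae_exists_mem_visitTower {B : Set X} (hB : MeasurableSet B) (h0 : D.μ B ≠ 0) :
    ∀ᵐ x ∂D.μ, ∃ M, x ∈ D.T.visitTower B M :=
  (D.ae_visits_past_and_future hB h0).mono fun _ hx => Homeomorph.exists_mem_visitTower hx.1 hx.2

end DynSys

theorem topological_Rokhlin_general {X : Type*}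
    [TopologicalSpace X] [PolishSpace X] [MeasurableSpace X] [BorelSpace X]
    (D : DynSys X) (hzd : ZeroDimensional X)
    (ε : ℝ) (hε : 0 < ε) (N : ℕ) :
    ∃ A : Set X, IsClopen A ∧
      (∀ i j : ℕ, i ≤ N → j ≤ N → i ≠ j →
        Disjoint ((fun x => D.iter (i : ℤ) x) '' A) ((fun x => D.iter (j : ℤ) x) '' A)) ∧
      D.μ (Set.univ \ ⋃ i ∈ Finset.range (N + 1), (fun x => D.iter (i : ℤ) x) '' A)
        < ENNReal.ofReal ε := by
  have hδ : 0 < ENNReal.ofReal ε / 2 := ENNReal.half_pos (ENNReal.ofReal_pos.2 hε).ne'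
  obtain ⟨x₀⟩ := nonempty_of_isProbabilityMeasure D.μ
  obtain ⟨B, hB, hx₀, hBsmall⟩ := hzd.exists_isClopen_measure_biUnion_preimage_lt (μ := D.μ)
    (Finset.Icc 1 N) (fun k => (D.T ^ (k : ℤ)).measurable) (fun k => (D.T ^ (k : ℤ)).injective)
    x₀ hδ
  have hB0 : D.μ B ≠ 0 := (D.fullSupport B hB.isOpen ⟨x₀, hx₀⟩).ne'
  obtain ⟨M, hM⟩ := exists_measure_compl_lt_of_ae_exists_mem
    (fun M => (D.T.isClopen_visitTower hB M).isOpen.measurableSet) D.T.monotone_visitTower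
    (D.ae_exists_mem_visitTower hB.isOpen.measurableSet hB0) hδ
  simp only [D.iter_apply]
  refine ⟨D.T.rokhlinBase B N M, D.T.isClopen_rokhlinBase hB N M,
    fun i j hi hj hij => D.T.disjoint_image_rokhlinBase hi hj hij, ?_⟩
  calc _ ≤ D.μ ((D.T.visitTower B M)ᶜ ∪ ⋃ k ∈ Finset.Icc 1 N, ⇑(D.T ^ (k : ℤ)) ⁻¹' B) :=
        measure_mono fun x hx => or_iff_not_imp_left.2 fun hxM =>
          (D.T.visitTower_subset N M (not_not.1 hxM)).resolve_left hx.2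
    _ ≤ _ := measure_union_le _ _
    _ < ENNReal.ofReal ε / 2 + ENNReal.ofReal ε / 2 := ENNReal.add_lt_add hM hBsmall
    _ = ENNReal.ofReal ε := ENNReal.add_halves _

/-- **Lemma 1.10** (topological non-singular Rokhlin lemma). Given `ε > 0` and `N > 0`
there is a clopen set `A` with `A, TA, …, T^N A` pairwise disjoint covering `X` up to
measure `ε`. -/
theorem topological_Rokhlin {X : Type*}
    [TopologicalSpace X] [PolishSpace X] [MeasurableSpace X] [BorelSpace X]
    (D : DynSys X) (hzd : ZeroDimensional X)
    (ε : ℝ) (hε : 0 < ε) (N : ℕ) (hN : 0 < N) :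
    ∃ A : Set X, IsClopen A ∧
      (∀ i j : ℕ, i ≤ N → j ≤ N → i ≠ j →
        Disjoint ((fun x => D.iter (i : ℤ) x) '' A) ((fun x => D.iter (j : ℤ) x) '' A)) ∧
      D.μ (Set.univ \ ⋃ i ∈ Finset.range (N + 1), (fun x => D.iter (i : ℤ) x) '' A)
        < ENNReal.ofReal ε :=
  topological_Rokhlin_general D hzd ε hε N
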